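/- arXiv:1303.6976 — 3 statements merged into one kernel-verified Lean document; each statement's English description precedes it below -/
import Mathlib

section
/- Let (R^t) be the sequence of parings realizing a fast (↣*)-reduction G ↣* H and (R'^t) the sequence realizing a fast (⇒*)-reduction G ⇒* H'. If Condition D(s) holds for every s < t, then R^t = R'^t. In particular, if D(t) holds for every t, then H = H', and G has a unique maximal (⇒*)-reduction whenever it has a unique maximal (↣*)-reduction. -/
/-- The set `⋂_{x_{-i} ∈ S_{-i}} P_i(x_i, x_{-i})` of common dominators of
strategy `xi` of player `i` relative to the paring `S`. -/
def domSet {I : Type*} [DecidableEq I] {X : I → Type*}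
    (P : ∀ i, (∀ j, X j) → Set (X i)) (S : ∀ i, Set (X i)) (i : I) (xi : X i) :
    Set (X i) :=
  ⋂ x ∈ {x : ∀ j, X j | ∀ j, j ≠ i → x j ∈ S j}, P i (Function.update x i xi)

variable {I : Type*} [DecidableEq I] {X : I → Type*}

/-- A fast `↣`-step eliminates exactly those `x_i ∈ S_i` with
`⋂_{x_{-i} ∈ S_{-i}} P_i(x_i,x_{-i}) ≠ ∅`. -/
def fastStepA (P : ∀ i, (∀ j, X j) → Set (X i)) (S S' : ∀ i, Set (X i)) : Prop :=
  ∀ i, S' i = {xi ∈ S i | ¬ (domSet P S i xi).Nonempty}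

/-- A fast `⇒`-step eliminates exactly those `x_i ∈ S_i` with
`⋂_{x_{-i} ∈ S_{-i}} P_i(x_i,x_{-i}) ∩ S_i ≠ ∅`. -/
def fastStepB (P : ∀ i, (∀ j, X j) → Set (X i)) (S S' : ∀ i, Set (X i)) : Prop :=
  ∀ i, S' i = {xi ∈ S i | ¬ (domSet P S i xi ∩ S i).Nonempty}

/-- The reduction `S ↣ S'`: every eliminated strategy is dominated relative
to the target paring `S'`. -/
def stepA (P : ∀ i, (∀ j, X j) → Set (X i)) (S S' : ∀ i, Set (X i)) : Prop :=
  (∀ i, S' i ⊆ S i) ∧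
    ∀ i (xi : X i), xi ∈ S i → xi ∉ S' i → (domSet P S' i xi).Nonempty

/-- The reduction `S ⇒ S'`. -/
def stepB (P : ∀ i, (∀ j, X j) → Set (X i)) (S S' : ∀ i, Set (X i)) : Prop :=
  (∀ i, S' i ⊆ S i) ∧
    ∀ i (xi : X i), xi ∈ S i → xi ∉ S' i → (domSet P S' i xi ∩ S' i).Nonempty

/-- `M` is a maximal `(↣*)`-reduction of the full game. -/
def isMaxRedA (P : ∀ i, (∀ j, X j) → Set (X i)) (M : ∀ i, Set (X i)) : Prop :=
  (∃ S : ℕ → ∀ i, Set (X i), (∀ i, S 0 i = Set.univ) ∧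
      (∀ t, fastStepA P (S t) (S (t + 1))) ∧ ∀ i, M i = ⋂ t, S t i) ∧
    ∀ H, stepA P M H → H = M

/-- `M` is a maximal `(⇒*)`-reduction of the full game. -/
def isMaxRedB (P : ∀ i, (∀ j, X j) → Set (X i)) (M : ∀ i, Set (X i)) : Prop :=
  (∃ S : ℕ → ∀ i, Set (X i), (∀ i, S 0 i = Set.univ) ∧
      (∀ t, fastStepB P (S t) (S (t + 1))) ∧ ∀ i, M i = ⋂ t, S t i) ∧
    ∀ H, stepB P M H → H = M

/-- Condition `D` for a paring `S`: every strategy strictly dominated relative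
to `S` has a dominator inside `S_i`. -/
def condD (P : ∀ i, (∀ j, X j) → Set (X i)) (S : ∀ i, Set (X i)) : Prop :=
  ∀ i (xi : X i), (domSet P S i xi).Nonempty →
    (domSet P S i xi ∩ S i).Nonempty

/-- With `(R^t)` the fast `↣*`-sequence and `(R'^t)` the fast
`⇒*`-sequence starting from `G`: if `D(s)` holds for all `s < t` then
`R^t = R'^t`; if `D(t)` holds for all `t` then the limits coincide, `H = H'`,
and `G` has a unique maximal `(⇒*)`-reduction whenever it has a unique maximal
`(↣*)`-reduction. -/
theorem stmt_8 (P : ∀ i, (∀ j, X j) → Set (X i))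
    (R R' : ℕ → ∀ i, Set (X i))
    (hR0 : ∀ i, R 0 i = Set.univ) (hR'0 : ∀ i, R' 0 i = Set.univ)
    (hRf : ∀ t, fastStepA P (R t) (R (t + 1)))
    (hR'f : ∀ t, fastStepB P (R' t) (R' (t + 1)))
    (H H' : ∀ i, Set (X i))
    (hH : ∀ i, H i = ⋂ t, R t i) (hH' : ∀ i, H' i = ⋂ t, R' t i) :
    (∀ t, (∀ s < t, condD P (R' s)) → R t = R' t) ∧
    ((∀ t, condD P (R' t)) → H = H') ∧
    ((∀ t, condD P (R' t)) →
      (∀ M₁ M₂, isMaxRedA P M₁ → isMaxRedA P M₂ → M₁ = M₂) →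
      ∀ M₁ M₂, isMaxRedB P M₁ → isMaxRedB P M₂ → M₁ = M₂) := by
  have key : ∀ t, (∀ s < t, condD P (R' s)) → R t = R' t := by
    intro t
    induction t with
    | zero => intro _; funext i; rw [hR0, hR'0]
    | succ t ih =>
      intro hD
      have hRt : R t = R' t := ih (fun s hs => hD s (Nat.lt_succ_of_lt hs))
      have hDt := hD t (Nat.lt_succ_self t)
      funext i
      rw [hRf t i, hR'f t i, hRt]
      ext xi
      simp only [Set.mem_setOf_eq]
      constructor
      · rintro ⟨h1, h2⟩
        exact ⟨h1, fun h => h2 (h.mono Set.inter_subset_left)⟩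
      · rintro ⟨h1, h2⟩
        exact ⟨h1, fun h => h2 (hDt i xi h)⟩
  have hBseq : ∀ S : ℕ → ∀ i, Set (X i), (∀ i, S 0 i = Set.univ) →
      (∀ t, fastStepB P (S t) (S (t + 1))) → ∀ t, S t = R' t := by
    intro S h0 hf t
    induction t with
    | zero => funext i; rw [h0, hR'0]
    | succ t ih => funext i; rw [hf t i, hR'f t i, ih]
  have hHH' : (∀ t, condD P (R' t)) → H = H' := by
    intro hD
    funext i
    rw [hH, hH']
    exact Set.iInter_congr fun t => by rw [key t (fun s _ => hD s)]
  refine ⟨key, hHH', ?_⟩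
  intro _ _ M₁ M₂ h₁ h₂
  obtain ⟨⟨S₁, hS₁0, hS₁f, hS₁M⟩, -⟩ := h₁
  obtain ⟨⟨S₂, hS₂0, hS₂f, hS₂M⟩, -⟩ := h₂
  funext i
  rw [hS₁M i, hS₂M i]
  exact Set.iInter_congr fun t => by
    rw [hBseq S₁ hS₁0 hS₁f t, hBseq S₂ hS₂0 hS₂f t]
end

section
/- Let G = (G_i, P_i, Q_i)_{i∈I} be a general qualitative game with property T such that x_i ∉ P_i(x_i, x_{-i}) for all x, and such that for every x ∈ Π G_i there exists z* ∈ Π G_i with z*_i ∈ Q_i(z_i, x_{-i}) for all z ∈ Π G_i and all i ∈ I. If H is a (⇒*)-reduction of G (the limit of a sequence of fast ⇒-reduction steps), then G and H have the same maximal elements: x* ∈ Π H_i satisfies P_i(x*) ∩ H_i = ∅ for all i if and only if x* satisfies P_i(x*) = ∅ for all i. -/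
/-- Let `(G_i, P_i, Q_i)` be a general qualitative game with
property T, with `x_i ∉ P_i(x)` for all `x`, such that for every `x` there is
`z*` with `z*_i ∈ Q_i(z_i, x_{-i})` for all profiles `z` and all `i`. If `H`
is a `(⇒*)`-reduction of `G` (limit of fast `⇒`-steps), then `G` and `H` have
the same maximal elements. -/
theorem stmt_11 {I : Type*} [DecidableEq I] {X : I → Type*}
    (P Q : ∀ i, (∀ j, X j) → Set (X i))
    -- property T
    (hPQ : ∀ i (x : ∀ j, X j), P i x ⊆ Q i x)
    (hT : ∀ i (x : ∀ j, X j) (yi : X i), yi ∈ P i x →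
      Q i (Function.update x i yi) ⊆ P i x)
    -- irreflexivity
    (hirr : ∀ i (x : ∀ j, X j), x i ∉ P i x)
    -- existence of `z*`
    (hz : ∀ x : ∀ j, X j, ∃ zs : ∀ j, X j, ∀ i (z : ∀ j, X j),
      zs i ∈ Q i (Function.update x i (z i)))
    -- fast `⇒*`-reduction sequence with limit `H`
    (R : ℕ → ∀ i, Set (X i)) (hR0 : ∀ i, R 0 i = Set.univ)
    (hRf : ∀ t i, R (t + 1) i =
      {xi ∈ R t i | ¬ (domSet P (R t) i xi ∩ R t i).Nonempty})
    (H : ∀ i, Set (X i)) (hH : ∀ i, H i = ⋂ t, R t i) :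
    ∀ xs : ∀ j, X j,
      ((∀ i, xs i ∈ H i) ∧ ∀ i, P i xs ∩ H i = ∅) ↔ (∀ i, P i xs = ∅) := by
  intro xs
  constructor
  · rintro ⟨hxs, hmax⟩ i
    by_contra hne
    rw [← Set.not_nonempty_iff_eq_empty, not_not] at hne
    obtain ⟨yi, hyi⟩ := hne
    obtain ⟨zs, hzs⟩ := hz xs
    -- xs is in every R t
    have hxsR : ∀ t j, xs j ∈ R t j := by
      intro t j
      have := hxs j
      rw [hH] at this
      exact Set.mem_iInter.mp this t
    -- zs i ∈ P i xs
    have hzP : zs i ∈ P i xs := by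
      have h1 : zs i ∈ Q i (Function.update xs i yi) := by
        have := hzs i (Function.update xs i yi)
        simpa using this
      exact hT i xs yi hyi h1
    -- zs i survives every round
    have hzR : ∀ t, zs i ∈ R t i := by
      intro t
      induction t with
      | zero => rw [hR0]; trivial
      | succ t ih =>
        rw [hRf]
        refine ⟨ih, ?_⟩
        rintro ⟨wi, hwdom, hwR⟩
        -- wi dominates zs i at xs
        have hw : wi ∈ P i (Function.update xs i (zs i)) := by
          have := Set.mem_iInter₂.mp hwdom xs (fun j _ => hxsR t j)
          exact this
        -- then zs i ∈ P i (update xs i (zs i)), contradicting irreflexivity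
        have h2 : Q i (Function.update xs i wi) ⊆
            P i (Function.update xs i (zs i)) := by
          have := hT i (Function.update xs i (zs i)) wi hw
          simpa [Function.update_idem] using this
        have h3 : zs i ∈ Q i (Function.update xs i wi) := by
          have := hzs i (Function.update xs i wi)
          simpa using this
        have h4 := h2 h3
        have := hirr i (Function.update xs i (zs i))
        rw [Function.update_self] at this
        exact this h4
    have hzH : zs i ∈ H i := by
      rw [hH]; exact Set.mem_iInter.mpr hzR
    have : zs i ∈ P i xs ∩ H i := ⟨hzP, hzH⟩
    rw [hmax i] at this
    exact this
  · intro hP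
    have hxsR : ∀ t j, xs j ∈ R t j := by
      intro t
      induction t with
      | zero => intro j; rw [hR0]; trivial
      | succ t ih =>
        intro j
        rw [hRf]
        refine ⟨ih j, ?_⟩
        rintro ⟨wi, hwdom, _⟩
        have hw : wi ∈ P j (Function.update xs j (xs j)) :=
          Set.mem_iInter₂.mp hwdom xs (fun k _ => ih k)
        rw [Function.update_eq_self, hP j] at hw
        exact hw
    constructor
    · intro i
      rw [hH]
      exact Set.mem_iInter.mpr fun t => hxsR t i
    · intro i
      rw [hP i, Set.empty_inter]
end

section
/- Let G = (G_i, P_i, Q_i)_{i∈I} be a general qualitative game with property T such that x_i ∉ P_i(x_i, x_{-i}) for all x, and such that for every x ∈ Π G_i there exists z* with z*_i ∈ Q_i(z_i, x_{-i}) for all z ∈ Π G_i and i ∈ I. If H is a (→*)-reduction of G (the limit of a sequence of fast →-reduction steps eliminating strategies dominated relative to the full original sets), then G and H have the same maximal elements. -/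
/-- Let `(G_i, P_i, Q_i)` be a general qualitative game with
property T, with `x_i ∉ P_i(x)` for all `x`, such that for every `x` there is
`z*` with `z*_i ∈ Q_i(z_i, x_{-i})` for all profiles `z` and all `i`. If `H`
is a `(→*)`-reduction of `G` (limit of fast `→`-steps), then `G` and `H` have
the same maximal elements. -/
theorem stmt_12 {I : Type*} [DecidableEq I] {X : I → Type*}
    (P Q : ∀ i, (∀ j, X j) → Set (X i))
    -- property T
    (hPQ : ∀ i (x : ∀ j, X j), P i x ⊆ Q i x)
    (hT : ∀ i (x : ∀ j, X j) (yi : X i), yi ∈ P i x →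
      Q i (Function.update x i yi) ⊆ P i x)
    -- irreflexivity
    (hirr : ∀ i (x : ∀ j, X j), x i ∉ P i x)
    -- existence of `z*`
    (hz : ∀ x : ∀ j, X j, ∃ zs : ∀ j, X j, ∀ i (z : ∀ j, X j),
      zs i ∈ Q i (Function.update x i (z i)))
    -- fast `→*`-reduction sequence with limit `H`
    (R : ℕ → ∀ i, Set (X i)) (hR0 : ∀ i, R 0 i = Set.univ)
    (hRf : ∀ t i, R (t + 1) i =
      {xi ∈ R t i | ¬ (domSet P (R t) i xi).Nonempty})
    (H : ∀ i, Set (X i)) (hH : ∀ i, H i = ⋂ t, R t i) :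
    ∀ xs : ∀ j, X j,
      ((∀ i, xs i ∈ H i) ∧ ∀ i, P i xs ∩ H i = ∅) ↔ (∀ i, P i xs = ∅) := by
  intro xs
  constructor
  · rintro ⟨hxsH, hmax⟩ i
    rw [← Set.not_nonempty_iff_eq_empty]
    rintro ⟨yi, hyi⟩
    obtain ⟨zs, hzs⟩ := hz xs
    have hziP : zs i ∈ P i xs := by
      have h1 : zs i ∈ Q i (Function.update xs i yi) := by
        simpa using hzs i (Function.update xs i yi)
      exact hT i xs yi hyi h1
    have hziH : zs i ∈ H i := by
      rw [hH]
      refine Set.mem_iInter.mpr fun t => ?_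
      induction t with
      | zero => rw [hR0]; trivial
      | succ t ih =>
        rw [hRf]
        refine ⟨ih, ?_⟩
        rintro ⟨wi, hwi⟩
        simp only [domSet, Set.mem_iInter] at hwi
        have hxsR : ∀ j, j ≠ i → xs j ∈ R t j := by
          intro j _
          have := hxsH j
          rw [hH] at this
          exact Set.mem_iInter.mp this t
        have hwP : wi ∈ P i (Function.update xs i (zs i)) := hwi xs hxsR
        have h2 : zs i ∈ Q i (Function.update xs i wi) := by
          simpa using hzs i (Function.update xs i wi)
        have h3 := hT i (Function.update xs i (zs i)) wi hwP
        rw [Function.update_idem] at h3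
        have h4 : zs i ∈ P i (Function.update xs i (zs i)) := h3 h2
        have h5 := hirr i (Function.update xs i (zs i))
        rw [Function.update_self] at h5
        exact h5 h4
    have : zs i ∈ P i xs ∩ H i := ⟨hziP, hziH⟩
    rw [hmax i] at this
    exact this
  · intro hP
    have hxsR : ∀ t i, xs i ∈ R t i := by
      intro t
      induction t with
      | zero => intro i; rw [hR0]; trivial
      | succ t ih =>
        intro i
        rw [hRf]
        refine ⟨ih i, ?_⟩
        rintro ⟨wi, hwi⟩
        simp only [domSet, Set.mem_iInter] at hwi
        have := hwi xs (fun j _ => ih j)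
        rw [Function.update_eq_self, hP i] at this
        exact this
    exact ⟨fun i => by rw [hH]; exact Set.mem_iInter.mpr fun t => hxsR t i,
      fun i => by rw [hP i]; exact Set.empty_inter _⟩
end
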